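/- Under the Poisson bracket {G_{bj}, G_{cℓ}} = G_{bℓ}G_{cj}/(λ_j - λ_ℓ) (j≠ℓ), {G_{bk}, λ_ℓ} = -G_{bk}δ_{ℓk}, one has {G_{jk}, det G} = 0 for all j,k, and {log det G, tr L} = -n, i.e. {det G, Σ_i λ_i} = -n · det G. -/

import Mathlib

/-!
Both identities are instances of Jacobi's formula for a derivation `D`: if `D` acts on the
entries of `G` by `D G_{iℓ} = G_{ik} c_ℓ` (that is, `D G = G X` with `X` supported on row `k`),
then column `ℓ` of `D G` is a multiple of column `k` of `G`, so expanding `D (det G)` column by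
column leaves only `c_k det G`. For `D = {G_{jk}, ·}` the bracket relations give
`c_ℓ = G_{jℓ}/(λ_k - λ_ℓ)` for `ℓ ≠ k` and `c_k = 0`; for `D = {λ_i, ·}` they give `c = e_i`, so
`{λ_i, det G} = det G`, and antisymmetry summed over `i` gives `{det G, tr L} = -n det G`.
-/

open Matrix

namespace Derivation

section Prod

variable {R A M : Type*} [CommSemiring R] [CommSemiring A] [AddCommMonoid M]
  [Algebra R A] [Module A M] [Module R M] (D : Derivation R A M)

theorem map_finsetProd {ι : Type*} [DecidableEq ι] (s : Finset ι) (f : ι → A) :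
    D (∏ i ∈ s, f i) = ∑ i ∈ s, (∏ j ∈ s.erase i, f j) • D (f i) := by
  induction s using Finset.induction_on with
  | empty => simp
  | insert a s ha ih =>
    rw [Finset.prod_insert ha, leibniz, ih, Finset.sum_insert ha, Finset.erase_insert ha,
      Finset.smul_sum, add_comm]
    congr 1
    refine Finset.sum_congr rfl fun i hi => ?_
    have hia : i ≠ a := ne_of_mem_of_not_mem hi ha
    rw [Finset.erase_insert_of_ne hia.symm,
      Finset.prod_insert fun h => ha (Finset.mem_of_mem_erase h), smul_smul]

end Prod

section Det

variable {R A : Type*} [CommSemiring R] [CommRing A] [Algebra R A] (D : Derivation R A A)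
  {n : Type*} [Fintype n] [DecidableEq n]

theorem map_det (M : Matrix n n A) :
    D M.det = ∑ ℓ, (M.updateCol ℓ fun i => D (M i ℓ)).det := by
  simp only [det_apply, Units.smul_def, map_sum, map_zsmul, map_finsetProd, smul_eq_mul,
    Finset.smul_sum]
  rw [Finset.sum_comm]
  refine Finset.sum_congr rfl fun ℓ _ => Finset.sum_congr rfl fun σ _ => ?_
  rw [← Finset.mul_prod_erase Finset.univ _ (Finset.mem_univ ℓ), mul_comm]
  simp only [updateCol_self]
  congr 2
  exact Finset.prod_congr rfl fun i hi => (updateCol_ne (Finset.ne_of_mem_erase hi)).symm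

theorem map_det_of_map_apply_eq_mul (M : Matrix n n A) (k : n) (c : n → A)
    (h : ∀ i ℓ, D (M i ℓ) = M i k * c ℓ) : D M.det = c k * M.det := by
  have hcol : ∀ ℓ, (fun i => D (M i ℓ)) = c ℓ • fun i => M i k := fun ℓ => by
    ext i
    rw [h, Pi.smul_apply, smul_eq_mul, mul_comm]
  simp only [map_det, hcol, det_updateCol_smul]
  rw [Finset.sum_eq_single k (fun ℓ _ hℓ => by rw [det_updateCol_eq_zero hℓ.symm, mul_zero])
    (by simp), updateCol_eq_self]

end Det

def ofLeibniz {A : Type*} [CommRing A] (d : A → A) (hadd : ∀ a b, d (a + b) = d a + d b)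
    (hleib : ∀ a b, d (a * b) = d a * b + a * d b) : Derivation ℤ A A :=
  mk' (AddMonoidHom.mk' d hadd).toIntLinearMap fun a b => by
    simp only [AddMonoidHom.coe_toIntLinearMap, AddMonoidHom.mk'_apply, smul_eq_mul, hleib]
    ring

@[simp]
theorem ofLeibniz_apply {A : Type*} [CommRing A] (d : A → A) (hadd) (hleib) (a : A) :
    ofLeibniz d hadd hleib a = d a :=
  rfl

end Derivation

/-- Under the quadratic bracket `{G_{bj}, G_{cℓ}} = G_{bℓ}G_{cj}/(λ_j - λ_ℓ)`
(for `j ≠ ℓ`), `{G_{bj},G_{cj}} = 0`, `{G_{bk}, λ_ℓ} = -G_{bk}δ_{ℓk}`, one has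
`{G_{jk}, det G} = 0` for all `j,k`, and `{det G, Σ_i λ_i} = -n·det G`
(i.e. `{log det G, tr L} = -n`). -/
theorem bracket_detG_trL
    {R : Type*} [CommRing R] (n : ℕ)
    (P : R → R → R)
    -- `P` is an antisymmetric biderivation:
    (hskew : ∀ a b, P a b = -P b a)
    (hadd : ∀ a b c, P a (b + c) = P a b + P a c)
    (hleib : ∀ a b c, P a (b * c) = P a b * c + b * P a c)
    (G : Matrix (Fin n) (Fin n) R) (lam : Fin n → R)
    (hunit : ∀ j ℓ : Fin n, j ≠ ℓ → IsUnit (lam j - lam ℓ))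
    (hGG : ∀ (b c j ℓ : Fin n), j ≠ ℓ →
      (lam j - lam ℓ) * P (G b j) (G c ℓ) = G b ℓ * G c j)
    (hGGdiag : ∀ (b c j : Fin n), P (G b j) (G c j) = 0)
    (hGlam : ∀ (b k ℓ : Fin n), P (G b k) (lam ℓ) = -(if ℓ = k then G b k else 0)) :
    (∀ j k : Fin n, P (G j k) G.det = 0) ∧
    P G.det (∑ i : Fin n, lam i) = -(n : R) * G.det := by
  have bracket_det : ∀ a k (c : Fin n → R), (∀ i ℓ, P a (G i ℓ) = G i k * c ℓ) →
      P a G.det = c k * G.det := fun a =>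
    (Derivation.ofLeibniz (P a) (hadd a) (hleib a)).map_det_of_map_apply_eq_mul G
  refine ⟨fun j k => ?_, ?_⟩
  · refine (bracket_det (G j k) k (fun ℓ => if ℓ = k then 0 else
      Ring.inverse (lam k - lam ℓ) * G j ℓ) fun i ℓ => ?_).trans (by simp)
    split_ifs with hℓ
    · rw [hℓ, mul_zero, hGGdiag]
    · rw [← Ring.inverse_mul_cancel_left _ (P _ _) (hunit k ℓ (Ne.symm hℓ)),
        hGG j i k ℓ (Ne.symm hℓ)]
      ring
  · have hlam : ∀ i, P G.det (lam i) = -G.det := fun i => by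
      rw [hskew, bracket_det (lam i) i (Pi.single i 1) fun r ℓ => ?_, Pi.single_eq_same, one_mul]
      rw [hskew, hGlam]
      rcases eq_or_ne ℓ i with rfl | hℓ
      · simp
      · simp [hℓ, Ne.symm hℓ]
    rw [← Derivation.ofLeibniz_apply (P G.det) (hadd _) (hleib _), map_sum]
    simp [hlam]
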